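/- arXiv:1802.01885 — 4 statements merged into one kernel-verified Lean document; each statement's English description precedes it below -/
import Mathlib

section
/- Let Γ be a 2-dimensional simplicial complex and Γ' its barycentric subdivision, viewed as tripartite with vertex classes V (barycentres of vertices), E (barycentres of edges), F (barycentres of faces). Then every 4-cycle in the 1-skeleton of Γ' whose vertices use all three classes V, E, F has a diagonal in Γ'; in particular every empty square of Γ' is bicolour (has vertices in only two of the classes). -/
/-- Adjacency in the barycentric subdivision: the barycentres of two simplices are joined
by an edge iff the simplices are strictly nested. -/
def adjBary {α : Type*} (s t : Finset α) : Prop := s ⊂ t ∨ t ⊂ s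

theorem adjBary.symm {α : Type*} {s t : Finset α} (h : adjBary s t) : adjBary t s := Or.symm h

theorem adjBary_sub {α : Type*} {s t : Finset α} (h : adjBary s t) (hc : s.card < t.card) :
    s ⊂ t := by
  rcases h with h | h
  · exact h
  · exact absurd (Finset.card_lt_card h) (by omega)

theorem adjBary_card_ne {α : Type*} {s t : Finset α} (h : adjBary s t) : s.card ≠ t.card := by
  rcases h with h | h
  · exact Nat.ne_of_lt (Finset.card_lt_card h)
  · exact (Nat.ne_of_lt (Finset.card_lt_card h)).symm

theorem case1 {α : Type*} [DecidableEq α] {p q r s : Finset α} (hne : p ≠ r)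
    (cp : p.card = 1) (cq : q.card = 2) (cr : r.card = 1) (cs : s.card = 3)
    (hpq : adjBary p q) (hqr : adjBary q r) (hrs : adjBary r s) (hsp : adjBary s p) :
    adjBary q s := by
  have h1 : p ⊂ q := adjBary_sub hpq (by omega)
  have h2 : r ⊂ q := adjBary_sub hqr.symm (by omega)
  have h3 : r ⊂ s := adjBary_sub hrs (by omega)
  have h4 : p ⊂ s := adjBary_sub hsp.symm (by omega)
  have hu : p ∪ r ⊆ q := Finset.union_subset h1.subset h2.subset
  have hcard : 2 ≤ (p ∪ r).card := by
    obtain ⟨a, ha⟩ := Finset.card_eq_one.mp cp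
    obtain ⟨b, hb⟩ := Finset.card_eq_one.mp cr
    have hab : a ≠ b := by rintro rfl; exact hne (ha.trans hb.symm)
    have hsub : ({a, b} : Finset α) ⊆ p ∪ r := by
      subst ha hb
      intro x hx
      simp only [Finset.mem_insert, Finset.mem_singleton] at hx
      simp only [Finset.mem_union, Finset.mem_singleton]
      tauto
    calc 2 = ({a, b} : Finset α).card := (Finset.card_pair hab).symm
      _ ≤ _ := Finset.card_le_card hsub
  have hq : q = p ∪ r := (Finset.eq_of_subset_of_card_le hu (by omega)).symm
  have hqs : q ⊆ s := by
    rw [hq]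
    exact Finset.union_subset h4.subset h3.subset
  exact Or.inl (hqs.ssubset_of_ne (by rintro rfl; omega))

theorem case2 {α : Type*} [DecidableEq α] {p q r s : Finset α}
    (cp : p.card = 2) (cq : q.card = 1) (cr : r.card = 2) (cs : s.card = 3)
    (hpq : adjBary p q) (hqr : adjBary q r) (hrs : adjBary r s) (hsp : adjBary s p) :
    adjBary q s := by
  have h1 : q ⊂ p := adjBary_sub hpq.symm (by omega)
  have h2 : p ⊂ s := adjBary_sub hsp.symm (by omega)
  exact Or.inl (h1.trans h2)

theorem case3 {α : Type*} [DecidableEq α] {p q r s : Finset α} (hne : p ≠ r)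
    (cp : p.card = 3) (cq : q.card = 1) (cr : r.card = 3) (cs : s.card = 2)
    (hpq : adjBary p q) (hqr : adjBary q r) (hrs : adjBary r s) (hsp : adjBary s p) :
    adjBary q s := by
  have h1 : q ⊂ p := adjBary_sub hpq.symm (by omega)
  have h2 : q ⊂ r := adjBary_sub hqr (by omega)
  have h3 : s ⊂ r := adjBary_sub hrs.symm (by omega)
  have h4 : s ⊂ p := adjBary_sub hsp (by omega)
  have hi : (p ∩ r).card ≤ 2 := by
    by_contra hcon
    push_neg at hcon
    have hpc : (p ∩ r).card ≤ p.card := Finset.card_le_card Finset.inter_subset_left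
    have heq : p ∩ r = p := Finset.eq_of_subset_of_card_le Finset.inter_subset_left (by omega)
    have hpr : p ⊆ r := by rw [← heq]; exact Finset.inter_subset_right
    exact hne (Finset.eq_of_subset_of_card_le hpr (by omega))
  have hs : s ⊆ p ∩ r := Finset.subset_inter h4.subset h3.subset
  have hse : s = p ∩ r := Finset.eq_of_subset_of_card_le hs (by omega)
  have hqs : q ⊆ s := by
    rw [hse]
    exact Finset.subset_inter h1.subset h2.subset
  exact Or.inl (hqs.ssubset_of_ne (by rintro rfl; omega))

/-- Let `Γ` be a 2-dimensional simplicial complex (simplices have at most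
3 vertices) and `Γ'` its barycentric subdivision, tripartite by the classes `V`, `E`, `F`
of barycentres of vertices, edges and faces (i.e. by cardinality 1, 2, 3). Every 4-cycle
in the 1-skeleton of `Γ'` whose vertices use all three classes has a diagonal in `Γ'`;
in particular every empty square of `Γ'` is bicolour. -/
theorem stmt7 {α : Type*} [DecidableEq α] (Γ : Set (Finset α))
    (hΓ : ∀ σ ∈ Γ, σ.Nonempty ∧ ∀ τ : Finset α, τ ⊆ σ → τ.Nonempty → τ ∈ Γ)
    (hdim : ∀ σ ∈ Γ, σ.card ≤ 3)
    (s₀ s₁ s₂ s₃ : Finset α)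
    (h₀ : s₀ ∈ Γ) (h₁ : s₁ ∈ Γ) (h₂ : s₂ ∈ Γ) (h₃ : s₃ ∈ Γ)
    (hne02 : s₀ ≠ s₂) (hne13 : s₁ ≠ s₃)
    (hadj01 : adjBary s₀ s₁) (hadj12 : adjBary s₁ s₂)
    (hadj23 : adjBary s₂ s₃) (hadj30 : adjBary s₃ s₀)
    (hall : ({s₀.card, s₁.card, s₂.card, s₃.card} : Finset ℕ) = {1, 2, 3}) :
    adjBary s₀ s₂ ∨ adjBary s₁ s₃ := by
  have d01 := adjBary_card_ne hadj01
  have d12 := adjBary_card_ne hadj12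
  have d23 := adjBary_card_ne hadj23
  have d30 := adjBary_card_ne hadj30
  have m0 : s₀.card = 1 ∨ s₀.card = 2 ∨ s₀.card = 3 := by
    have : s₀.card ∈ ({1, 2, 3} : Finset ℕ) := hall ▸ (by simp)
    simpa using this
  have m1 : s₁.card = 1 ∨ s₁.card = 2 ∨ s₁.card = 3 := by
    have : s₁.card ∈ ({1, 2, 3} : Finset ℕ) := hall ▸ (by simp)
    simpa using this
  have m2 : s₂.card = 1 ∨ s₂.card = 2 ∨ s₂.card = 3 := by
    have : s₂.card ∈ ({1, 2, 3} : Finset ℕ) := hall ▸ (by simp)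
    simpa using this
  have m3 : s₃.card = 1 ∨ s₃.card = 2 ∨ s₃.card = 3 := by
    have : s₃.card ∈ ({1, 2, 3} : Finset ℕ) := hall ▸ (by simp)
    simpa using this
  rcases m0 with c0 | c0 | c0 <;> rcases m1 with c1 | c1 | c1 <;>
    rcases m2 with c2 | c2 | c2 <;> rcases m3 with c3 | c3 | c3 <;>
    rw [c0, c1, c2, c3] at hall <;>
    first
    | omega
    | exact absurd hall (by decide)
    | exact Or.inr (case1 hne02 c0 c1 c2 c3 hadj01 hadj12 hadj23 hadj30)
    | exact Or.inr (adjBary.symm (case1 hne02 c0 c3 c2 c1 hadj30.symm hadj23.symm hadj12.symm hadj01.symm))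
    | exact Or.inr (case2 c0 c1 c2 c3 hadj01 hadj12 hadj23 hadj30)
    | exact Or.inr (adjBary.symm (case2 c0 c3 c2 c1 hadj30.symm hadj23.symm hadj12.symm hadj01.symm))
    | exact Or.inr (case3 hne02 c0 c1 c2 c3 hadj01 hadj12 hadj23 hadj30)
    | exact Or.inr (adjBary.symm (case3 hne02 c0 c3 c2 c1 hadj30.symm hadj23.symm hadj12.symm hadj01.symm))
    | exact Or.inl (case1 hne13 c1 c0 c3 c2 hadj01.symm hadj30.symm hadj23.symm hadj12.symm)
    | exact Or.inl (adjBary.symm (case1 hne13 c1 c2 c3 c0 hadj12 hadj23 hadj30 hadj01))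
    | exact Or.inl (case2 c1 c0 c3 c2 hadj01.symm hadj30.symm hadj23.symm hadj12.symm)
    | exact Or.inl (adjBary.symm (case2 c1 c2 c3 c0 hadj12 hadj23 hadj30 hadj01))
    | exact Or.inl (case3 hne13 c1 c0 c3 c2 hadj01.symm hadj30.symm hadj23.symm hadj12.symm)
    | exact Or.inl (adjBary.symm (case3 hne13 c1 c2 c3 c0 hadj12 hadj23 hadj30 hadj01))
end

section
/- Let γ be a π-geodesic of length at least 2π in a simplicial complex Λ equipped with the all-right spherical metric. Then γ is not contained in the star st(v, Λ) of any vertex v lying in the minimal subcomplex N(γ) containing γ. -/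
/-- Let `γ` be a `π`-geodesic of length at least `2π` in a simplicial
complex `Λ` with the all-right spherical metric (modelled here as a metric space): `γ` is
parametrised by arc length on `[0, L]` with `L ≥ 2π` and is isometric on every subsegment
of length at most `π`. If `v` is a vertex of the minimal subcomplex `N(γ)` containing `γ`
(so that some point of `γ` lies at distance `< π/2` from `v`), then `γ` is not contained
in the star `st(v, Λ) = {x : d(x, v) ≤ π/2}`: some point of `γ` lies at distance `> π/2`
from `v`. -/
theorem stmt9 {Λ : Type*} [MetricSpace Λ] (L : ℝ) (hL : 2 * Real.pi ≤ L)
    (γ : ℝ → Λ)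
    (hgeo : ∀ s ∈ Set.Icc (0 : ℝ) L, ∀ t ∈ Set.Icc (0 : ℝ) L,
      |s - t| ≤ Real.pi → dist (γ s) (γ t) = |s - t|)
    (v : Λ) (hv : ∃ x ∈ Set.Icc (0 : ℝ) L, dist (γ x) v < Real.pi / 2) :
    ∃ t ∈ Set.Icc (0 : ℝ) L, Real.pi / 2 < dist (γ t) v := by
  obtain ⟨x, hx, hxv⟩ := hv
  have hpi := Real.pi_pos
  obtain ⟨hx0, hxL⟩ := hx
  -- choose t at distance exactly π from x within [0, L]
  obtain ⟨t, ht, hdist⟩ : ∃ t ∈ Set.Icc (0 : ℝ) L, |x - t| = Real.pi := by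
    by_cases h : x + Real.pi ≤ L
    · exact ⟨x + Real.pi, ⟨by linarith, h⟩, by rw [abs_sub_comm]; simp [abs_of_nonneg hpi.le]⟩
    · refine ⟨x - Real.pi, ⟨by linarith, by linarith⟩, ?_⟩
      simp [abs_of_nonneg hpi.le]
  have hd : dist (γ x) (γ t) = Real.pi := by
    rw [hgeo x ⟨hx0, hxL⟩ t ht (le_of_eq hdist), hdist]
  refine ⟨t, ht, ?_⟩
  have := dist_triangle (γ x) (γ t) v
  have h2 : dist (γ t) v = dist v (γ t) := dist_comm _ _
  have := dist_triangle (γ x) v (γ t)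
  nlinarith [dist_comm v (γ t), dist_nonneg (x := γ t) (y := v)]
end

section
/- Fix k < n. An n-chain Σ over Z/2 in a cube complex X is a cycle if and only if for every k-cube e of X the localised chain loc_e(Σ) in the link lk(e, X) is a cycle. Moreover, if Σ is a boundary then so is loc_e(Σ) for every k-cube e. -/
open scoped Classical

noncomputable section

/-- A combinatorial cube of a cube complex embedded in a hypercube with coordinate set
`I`: each coordinate is either fixed at `0`/`1` (`some b`) or free (`none`). -/
abbrev QCube (I : Type*) := I → Option Bool

/-- The dimension of a cube: the number of free coordinates. -/
def qdim {I : Type*} [Fintype I] (c : QCube I) : ℕ :=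
  (Finset.univ.filter fun i => c i = none).card

/-- `e` is a face of `c`: wherever `c` is fixed, `e` agrees with it. -/
def IsFaceOf {I : Type*} (e c : QCube I) : Prop := ∀ i, c i ≠ none → e i = c i

/-- A cube complex: a family of cubes closed under taking faces. -/
def IsCubeComplex {I : Type*} (X : Set (QCube I)) : Prop :=
  ∀ c ∈ X, ∀ e : QCube I, IsFaceOf e c → e ∈ X

/-- The cubical boundary over `ZMod 2`: the boundary of a cube is the sum of its
codimension-one faces. -/
def cbdry {I : Type*} [Fintype I] [DecidableEq I] (S : QCube I →₀ ZMod 2) :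
    QCube I →₀ ZMod 2 :=
  S.sum fun c a =>
    ∑ i ∈ Finset.univ.filter (fun i => c i = none),
      (Finsupp.single (Function.update c i (some false)) a
        + Finsupp.single (Function.update c i (some true)) a)

/-- The simplicial boundary over `ZMod 2` of chains in a link (reduced: a vertex has the
empty simplex as boundary). -/
def sbdry {I : Type*} [DecidableEq I] (c : Finset I →₀ ZMod 2) : Finset I →₀ ZMod 2 :=
  c.sum fun σ a => ∑ v ∈ σ, Finsupp.single (σ.erase v) a

/-- The localisation map `loc_e`: a cube `c` containing `e` as a face contributes the
simplex of `lk(e, X)` given by the coordinates which are free in `c` but fixed in `e`. -/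
def loc {I : Type*} [Fintype I] [DecidableEq I] (e : QCube I) (S : QCube I →₀ ZMod 2) :
    Finset I →₀ ZMod 2 :=
  S.sum fun c a =>
    if IsFaceOf e c then
      Finsupp.single (Finset.univ.filter fun i => c i = none ∧ e i ≠ none) a
    else 0

/-- `σ` is a simplex of the link `lk(e, X)`: freeing the coordinates of `σ` in `e`
produces a cube of `X`. -/
def inLink {I : Type*} [DecidableEq I] (X : Set (QCube I)) (e : QCube I) (σ : Finset I) :
    Prop :=
  (∀ i ∈ σ, e i ≠ none) ∧ (fun i => if i ∈ σ then none else e i) ∈ X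

/-!
Localisation commutes with the boundary maps. The facets of a cube `c ⊇ e` come in pairs,
the two faces of `c` across a free coordinate `i`: if `i` is free in `e` neither contains `e`,
otherwise exactly one does, and it localises to `σ(c) \ {i}`. This gives the "only if" part
and, applied to a filling `W` of `S`, the filling `loc_e W` of `loc_e S`.

Conversely a cube `f ⊇ e` is recovered from `e` and `σ(f)`, so the coefficient of `f` in a
chain equals the coefficient of `σ(f)` in its localisation at `e`. Every cube of dimension at
least `k` has a `k`-face, so a chain of dimension at least `k` whose localisations at all
`k`-cubes vanish is zero; apply this to `∂S`, an `(n-1)`-chain with `k ≤ n - 1`.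
-/

open Finset

section CubeChains

variable {I : Type*} [Fintype I] [DecidableEq I]

def freeCoords (c : QCube I) : Finset I := univ.filter fun i => c i = none

/-- For a cube `c` having `e` as a face, the simplex `σ` of `lk(e, X)` with `c = c(σ)`. -/
def linkSimplex (e c : QCube I) : Finset I := univ.filter fun i => c i = none ∧ e i ≠ none

/-- The cube `c(σ)` of the paper: `e` with the coordinates of `σ` freed. -/
def cubeOfSimplex (e : QCube I) (σ : Finset I) : QCube I := fun i => if i ∈ σ then none else e i

def IsCubeChain (X : Set (QCube I)) (n : ℕ) (S : QCube I →₀ ZMod 2) : Prop :=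
  ∀ c ∈ S.support, c ∈ X ∧ qdim c = n

omit [DecidableEq I] in
lemma qdim_eq_card_freeCoords (c : QCube I) : qdim c = (freeCoords c).card := rfl

omit [DecidableEq I] in
@[simp]
lemma mem_freeCoords {c : QCube I} {i : I} : i ∈ freeCoords c ↔ c i = none := by
  simp [freeCoords]

omit [DecidableEq I] in
@[simp]
lemma mem_linkSimplex {e c : QCube I} {i : I} :
    i ∈ linkSimplex e c ↔ c i = none ∧ e i ≠ none := by
  simp [linkSimplex]

omit [DecidableEq I] in
lemma linkSimplex_eq_filter (e c : QCube I) :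
    linkSimplex e c = (freeCoords c).filter fun i => e i ≠ none := by
  ext i; simp

omit [Fintype I] in
lemma isFaceOf_update_some_iff {e c : QCube I} {i : I} (hi : c i = none) (b : Bool) :
    IsFaceOf e (Function.update c i (some b)) ↔ IsFaceOf e c ∧ e i = some b := by
  constructor
  · intro h
    refine ⟨fun j hj => ?_, by simpa using h i (by simp)⟩
    have hji : j ≠ i := by rintro rfl; exact hj hi
    simpa [hji] using h j (by simpa [hji] using hj)
  · rintro ⟨h, hei⟩ j hj
    rcases eq_or_ne j i with rfl | hji
    · simpa using hei
    · simp only [Function.update_of_ne hji] at hj ⊢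
      exact h j hj

lemma linkSimplex_update (e c : QCube I) (i : I) (b : Bool) :
    linkSimplex e (Function.update c i (some b)) = (linkSimplex e c).erase i := by
  ext j
  by_cases h : j = i <;> simp [h]

lemma freeCoords_update (c : QCube I) (i : I) (b : Bool) :
    freeCoords (Function.update c i (some b)) = (freeCoords c).erase i := by
  ext j
  by_cases h : j = i <;> simp [h]

lemma cubeOfSimplex_linkSimplex {e c : QCube I} (h : IsFaceOf e c) :
    cubeOfSimplex e (linkSimplex e c) = c := by
  funext j
  by_cases hj : c j = none
  · by_cases he : e j = none <;> simp [cubeOfSimplex, hj, he]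
  · simp [cubeOfSimplex, hj, h j hj]

lemma eq_of_linkSimplex_eq {e c c' : QCube I} (h : IsFaceOf e c) (h' : IsFaceOf e c')
    (hσ : linkSimplex e c = linkSimplex e c') : c = c' := by
  rw [← cubeOfSimplex_linkSimplex h, hσ, cubeOfSimplex_linkSimplex h']

omit [DecidableEq I] in
lemma card_linkSimplex_add_qdim {e c : QCube I} (h : IsFaceOf e c) :
    (linkSimplex e c).card + qdim e = qdim c := by
  have hfree : freeCoords e = (freeCoords c).filter fun i => e i = none := by
    ext j
    simp only [mem_freeCoords, mem_filter]
    refine ⟨fun hj => ⟨?_, hj⟩, And.right⟩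
    by_contra hc
    exact hc ((h j hc).symm.trans hj)
  rw [qdim_eq_card_freeCoords, qdim_eq_card_freeCoords, hfree, linkSimplex_eq_filter, add_comm]
  exact card_filter_add_card_filter_not _

omit [Fintype I] in
lemma isFaceOf_update_some {c : QCube I} {i : I} (hi : c i = none) (b : Bool) :
    IsFaceOf (Function.update c i (some b)) c := by
  intro j hj
  rw [Function.update_of_ne (by rintro rfl; exact hj hi)]

lemma qdim_update_some {c : QCube I} {i : I} (hi : c i = none) (b : Bool) :
    qdim (Function.update c i (some b)) = qdim c - 1 := by
  rw [qdim_eq_card_freeCoords, freeCoords_update, card_erase_of_mem (mem_freeCoords.mpr hi),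
    qdim_eq_card_freeCoords]

omit [DecidableEq I] in
lemma exists_isFaceOf_qdim_eq {f : QCube I} {k : ℕ} (hk : k ≤ qdim f) :
    ∃ e, IsFaceOf e f ∧ qdim e = k := by
  obtain ⟨A, hA, rfl⟩ := exists_subset_card_eq hk
  refine ⟨fun j => if j ∈ A then none else some ((f j).getD false), fun j hj => ?_, ?_⟩
  · have hjA : j ∉ A := fun hjA => hj (mem_freeCoords.mp (hA hjA))
    obtain ⟨b, hb⟩ := Option.ne_none_iff_exists'.mp hj
    simp [hjA, hb]
  · rw [qdim_eq_card_freeCoords]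
    congr 1
    ext j
    by_cases hj : j ∈ A <;> simp [hj]

def locHom (e : QCube I) : (QCube I →₀ ZMod 2) →+ (Finset I →₀ ZMod 2) :=
  Finsupp.liftAddHom fun c => if IsFaceOf e c then Finsupp.singleAddHom (linkSimplex e c) else 0

def cbdryHom : (QCube I →₀ ZMod 2) →+ (QCube I →₀ ZMod 2) :=
  Finsupp.liftAddHom fun c => ∑ i ∈ freeCoords c,
    (Finsupp.singleAddHom (Function.update c i (some false))
      + Finsupp.singleAddHom (Function.update c i (some true)))

omit [Fintype I] in
def sbdryHom : (Finset I →₀ ZMod 2) →+ (Finset I →₀ ZMod 2) :=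
  Finsupp.liftAddHom fun σ => ∑ v ∈ σ, Finsupp.singleAddHom (σ.erase v)

lemma coe_locHom (e : QCube I) : ⇑(locHom e) = loc e := by
  funext S
  simp only [locHom, Finsupp.liftAddHom_apply, loc]
  congr 1; funext c a
  split_ifs <;> rfl

lemma coe_cbdryHom : ⇑(cbdryHom : (QCube I →₀ ZMod 2) →+ _) = cbdry := by
  funext S
  simp only [cbdryHom, Finsupp.liftAddHom_apply, cbdry, freeCoords]
  congr 1; funext c a
  simp

omit [Fintype I] in
lemma coe_sbdryHom : ⇑(sbdryHom : (Finset I →₀ ZMod 2) →+ _) = sbdry := by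
  funext S
  simp only [sbdryHom, Finsupp.liftAddHom_apply, sbdry]
  congr 1; funext σ a
  simp

omit [DecidableEq I] in
lemma locHom_single (e c : QCube I) (a : ZMod 2) :
    locHom e (Finsupp.single c a)
      = if IsFaceOf e c then Finsupp.single (linkSimplex e c) a else 0 := by
  rw [locHom, Finsupp.liftAddHom_apply_single]
  split_ifs <;> rfl

lemma cbdryHom_single (c : QCube I) (a : ZMod 2) :
    cbdryHom (Finsupp.single c a) = ∑ i ∈ freeCoords c,
      (Finsupp.single (Function.update c i (some false)) a
        + Finsupp.single (Function.update c i (some true)) a) := by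
  simp [cbdryHom]

omit [Fintype I] in
lemma sbdryHom_single (σ : Finset I) (a : ZMod 2) :
    sbdryHom (Finsupp.single σ a) = ∑ v ∈ σ, Finsupp.single (σ.erase v) a := by
  simp [sbdryHom]

lemma locHom_single_facets {e c : QCube I} {i : I} (hi : c i = none) (a : ZMod 2) :
    locHom e (Finsupp.single (Function.update c i (some false)) a)
        + locHom e (Finsupp.single (Function.update c i (some true)) a)
      = if IsFaceOf e c ∧ e i ≠ none then Finsupp.single ((linkSimplex e c).erase i) a
        else 0 := by
  simp only [locHom_single, isFaceOf_update_some_iff hi, linkSimplex_update]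
  rcases e i with _ | _ | _ <;> simp

lemma locHom_comp_cbdryHom (e : QCube I) :
    (locHom e).comp cbdryHom = sbdryHom.comp (locHom e) := by
  refine Finsupp.addHom_ext fun c a => ?_
  simp only [AddMonoidHom.comp_apply, cbdryHom_single, map_sum, map_add]
  rw [sum_congr rfl fun i hi => locHom_single_facets (mem_freeCoords.mp hi) a, locHom_single]
  by_cases hf : IsFaceOf e c
  · simp only [hf, true_and, if_true, sbdryHom_single, linkSimplex_eq_filter, sum_filter]
  · simp [hf]

lemma loc_cbdry (e : QCube I) (S : QCube I →₀ ZMod 2) : loc e (cbdry S) = sbdry (loc e S) := by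
  rw [← coe_locHom, ← coe_cbdryHom, ← coe_sbdryHom]
  exact DFunLike.congr_fun (locHom_comp_cbdryHom e) S

lemma loc_apply_linkSimplex {e f : QCube I} (h : IsFaceOf e f) (T : QCube I →₀ ZMod 2) :
    loc e T (linkSimplex e f) = T f := by
  rw [← coe_locHom]
  suffices (Finsupp.applyAddHom (linkSimplex e f)).comp (locHom e) = Finsupp.applyAddHom f from
    DFunLike.congr_fun this T
  refine Finsupp.addHom_ext fun c a => ?_
  simp only [AddMonoidHom.comp_apply, Finsupp.applyAddHom_apply, locHom_single]
  by_cases hc : IsFaceOf e c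
  · simp only [hc, if_true, Finsupp.single_apply]
    exact if_congr ⟨eq_of_linkSimplex_eq hc h, congrArg _⟩ rfl rfl
  · rw [if_neg hc, Finsupp.single_eq_of_ne]
    · rfl
    · rintro rfl; exact hc h

lemma mem_support_loc {e : QCube I} {W : QCube I →₀ ZMod 2} {σ : Finset I}
    (hσ : σ ∈ (loc e W).support) : ∃ c ∈ W.support, IsFaceOf e c ∧ linkSimplex e c = σ := by
  obtain ⟨c, hc, hσ⟩ := mem_biUnion.mp (Finsupp.support_sum hσ)
  refine ⟨c, hc, ?_⟩
  split_ifs at hσ with hf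
  · exact ⟨hf, (mem_singleton.mp (Finsupp.support_single_subset hσ)).symm⟩
  · simp at hσ

lemma IsCubeChain.cbdry {X : Set (QCube I)} {n : ℕ} {S : QCube I →₀ ZMod 2}
    (hX : IsCubeComplex X) (hS : IsCubeChain X n S) : IsCubeChain X (n - 1) (cbdry S) := by
  intro f hf
  obtain ⟨c, hc, hf⟩ := mem_biUnion.mp (Finsupp.support_sum hf)
  obtain ⟨i, hi, hf⟩ := mem_biUnion.mp (Finsupp.support_finsetSum hf)
  obtain ⟨hcX, rfl⟩ := hS c hc
  have hi : c i = none := (mem_filter.mp hi).2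
  rcases mem_union.mp (Finsupp.support_add hf) with hf | hf <;>
  · obtain rfl := mem_singleton.mp (Finsupp.support_single_subset hf)
    exact ⟨hX c hcX _ (isFaceOf_update_some hi _), qdim_update_some hi _⟩

lemma IsCubeChain.inLink_of_mem_support_loc {X : Set (QCube I)} {m : ℕ}
    {W : QCube I →₀ ZMod 2} (hW : IsCubeChain X m W) {e : QCube I} {σ : Finset I}
    (hσ : σ ∈ (loc e W).support) : inLink X e σ ∧ σ.card + qdim e = m := by
  obtain ⟨c, hc, hec, rfl⟩ := mem_support_loc hσ
  obtain ⟨hcX, rfl⟩ := hW c hc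
  refine ⟨⟨fun i hi => (mem_linkSimplex.mp hi).2, ?_⟩, card_linkSimplex_add_qdim hec⟩
  show cubeOfSimplex e (linkSimplex e c) ∈ X
  rwa [cubeOfSimplex_linkSimplex hec]

lemma IsCubeChain.eq_zero_of_forall_loc_eq_zero {X : Set (QCube I)} {m k : ℕ}
    {T : QCube I →₀ ZMod 2} (hX : IsCubeComplex X) (hT : IsCubeChain X m T) (hkm : k ≤ m)
    (h : ∀ e ∈ X, qdim e = k → loc e T = 0) : T = 0 := by
  ext f
  by_cases hf : f ∈ T.support
  · obtain ⟨hfX, rfl⟩ := hT f hf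
    obtain ⟨e, hef, hek⟩ := exists_isFaceOf_qdim_eq hkm
    rw [← loc_apply_linkSimplex hef, h e (hX f hfX e hef) hek]
    rfl
  · exact Finsupp.notMem_support_iff.mp hf

end CubeChains

/-- Fix `k < n`. An `n`-chain `S` over `ZMod 2` in a cube complex `X`
is a cycle iff for every `k`-cube `e` of `X` the localised chain `loc_e(S)` is a cycle in
the link `lk(e, X)`. Moreover, if `S` is a boundary (of an `(n+1)`-chain of `X`) then so
is `loc_e(S)` (of a chain supported on the simplices of `lk(e, X)`), for every `k`-cube
`e`. -/
theorem stmt15 {I : Type*} [Fintype I] [DecidableEq I]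
    (X : Set (QCube I)) (hX : IsCubeComplex X)
    (n k : ℕ) (hkn : k < n)
    (S : QCube I →₀ ZMod 2) (hsupp : ∀ c ∈ S.support, c ∈ X ∧ qdim c = n) :
    (cbdry S = 0 ↔ ∀ e : QCube I, e ∈ X → qdim e = k → sbdry (loc e S) = 0)
    ∧ ((∃ W : QCube I →₀ ZMod 2, (∀ c ∈ W.support, c ∈ X ∧ qdim c = n + 1) ∧ cbdry W = S) →
        ∀ e : QCube I, e ∈ X → qdim e = k →
          ∃ T : Finset I →₀ ZMod 2,
            (∀ σ ∈ T.support, inLink X e σ ∧ σ.card = n - k + 1) ∧ sbdry T = loc e S) := by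
  refine ⟨⟨fun h e _ _ => ?_, fun h => ?_⟩, ?_⟩
  · rw [← loc_cbdry, h, ← coe_locHom, map_zero]
  · refine IsCubeChain.eq_zero_of_forall_loc_eq_zero hX (IsCubeChain.cbdry hX hsupp)
      (Nat.le_sub_one_of_lt hkn) fun e he hek => ?_
    rw [loc_cbdry, h e he hek]
  · rintro ⟨W, hW, rfl⟩ e _ hek
    refine ⟨loc e W, fun σ hσ => ?_, (loc_cbdry e W).symm⟩
    obtain ⟨hlink, hcard⟩ := IsCubeChain.inLink_of_mem_support_loc hW hσ
    exact ⟨hlink, by omega⟩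
end
end

section
/- Let Γ_A and Γ_B be smartly paired n-coloured simplicial complexes of pure dimension k_A and k_B respectively. Then the cube complex with coupled links X_{Γ_A,Γ_B} has pure dimension k_A + k_B + 2 − n. -/
open Finset

/-- A simplicial complex on vertex set `V`, allowing the empty simplex: a family of
finite vertex sets closed under taking subsets. -/
def IsComplex {V : Type*} (Γ : Set (Finset V)) : Prop :=
  ∀ σ ∈ Γ, ∀ τ : Finset V, τ ⊆ σ → τ ∈ Γ

/-- An `n`-colouring `col` makes `Γ` `n`-partite: each simplex has at most one vertex of
each colour. -/
def IsColoured {V : Type*} {n : ℕ} (col : V → Fin n) (Γ : Set (Finset V)) : Prop :=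
  ∀ σ ∈ Γ, ∀ v ∈ σ, ∀ w ∈ σ, col v = col w → v = w

/-- `Γ` has pure dimension `kk`: every simplex has at most `kk + 1` vertices and is
contained in a simplex with exactly `kk + 1` vertices. -/
def PureDim {V : Type*} (Γ : Set (Finset V)) (kk : ℕ) : Prop :=
  (∀ σ ∈ Γ, σ.card ≤ kk + 1) ∧ ∀ σ ∈ Γ, ∃ τ ∈ Γ, σ ⊆ τ ∧ τ.card = kk + 1

/-- Two coloured simplices are complementary: for each colour exactly one of them has a
vertex of that colour. -/
def Complementary {A B : Type*} [DecidableEq A] [DecidableEq B] {n : ℕ}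
    (colA : A → Fin n) (colB : B → Fin n) (a : Finset A) (b : Finset B) : Prop :=
  Disjoint (a.image colA) (b.image colB) ∧ a.image colA ∪ b.image colB = Finset.univ

/-- `Γ_A` and `Γ_B` are smartly paired: every maximal simplex of each admits a
complementary simplex in the other. -/
def SmartlyPaired {A B : Type*} [DecidableEq A] [DecidableEq B] {n : ℕ}
    (colA : A → Fin n) (colB : B → Fin n)
    (ΓA : Set (Finset A)) (ΓB : Set (Finset B)) : Prop :=
  (∀ a ∈ ΓA, (∀ a' ∈ ΓA, a ⊆ a' → a = a') → ∃ b ∈ ΓB, Complementary colA colB a b) ∧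
  (∀ b ∈ ΓB, (∀ b' ∈ ΓB, b ⊆ b' → b = b') → ∃ a ∈ ΓA, Complementary colA colB a b)

/-- The cubes of the cube complex with coupled links `X_{Γ_A, Γ_B}`: pairs `(a, b)` of
simplices whose colour sets together cover all `n` colours. -/
def clccCubes {A B : Type*} [DecidableEq A] [DecidableEq B] {n : ℕ}
    (colA : A → Fin n) (colB : B → Fin n)
    (ΓA : Set (Finset A)) (ΓB : Set (Finset B)) : Set (Finset A × Finset B) :=
  {p | p.1 ∈ ΓA ∧ p.2 ∈ ΓB ∧ p.1.image colA ∪ p.2.image colB = Finset.univ}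

/-- The dimension of the cube `Q(a, b)`: the number of colours common to `a` and `b`. -/
def clccDim {A B : Type*} [DecidableEq A] [DecidableEq B] {n : ℕ}
    (colA : A → Fin n) (colB : B → Fin n) (p : Finset A × Finset B) : ℕ :=
  (p.1.image colA ∩ p.2.image colB).card

/-- If `Γ_A` and `Γ_B` are smartly paired `n`-coloured simplicial
complexes of pure dimension `k_A` and `k_B` respectively, then the cube complex with
coupled links `X_{Γ_A, Γ_B}` has pure dimension `k_A + k_B + 2 − n`: every cube has
dimension at most `k_A + k_B + 2 − n` and is a face of a cube of exactly that
dimension. -/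
theorem stmt16 {A B : Type*} [DecidableEq A] [DecidableEq B] {n : ℕ}
    (colA : A → Fin n) (colB : B → Fin n)
    (ΓA : Set (Finset A)) (ΓB : Set (Finset B))
    (hA : IsComplex ΓA) (hB : IsComplex ΓB)
    (hcolA : IsColoured colA ΓA) (hcolB : IsColoured colB ΓB)
    (kA kB : ℕ) (hpureA : PureDim ΓA kA) (hpureB : PureDim ΓB kB)
    (hsmart : SmartlyPaired colA colB ΓA ΓB) :
    (∀ p ∈ clccCubes colA colB ΓA ΓB, clccDim colA colB p ≤ kA + kB + 2 - n)
    ∧ (∀ p ∈ clccCubes colA colB ΓA ΓB, ∃ q ∈ clccCubes colA colB ΓA ΓB,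
        p.1 ⊆ q.1 ∧ p.2 ⊆ q.2 ∧ clccDim colA colB q = kA + kB + 2 - n) := by
  obtain ⟨hcapA, hmaxA⟩ := hpureA
  obtain ⟨hcapB, hmaxB⟩ := hpureB
  have key : ∀ (a : Finset A) (b : Finset B), a ∈ ΓA → b ∈ ΓB →
      a.image colA ∪ b.image colB = Finset.univ →
      (a.image colA ∩ b.image colB).card + n = a.card + b.card := by
    intro a b ha hb hu
    have h1 : (a.image colA).card = a.card :=
      Finset.card_image_of_injOn (fun v hv w hw h => hcolA a ha v hv w hw h)
    have h2 : (b.image colB).card = b.card :=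
      Finset.card_image_of_injOn (fun v hv w hw h => hcolB b hb v hv w hw h)
    have h3 := Finset.card_inter_add_card_union (a.image colA) (b.image colB)
    rw [hu, Finset.card_univ, Fintype.card_fin] at h3
    omega
  constructor
  · rintro p ⟨ha, hb, hu⟩
    have hk := key p.1 p.2 ha hb hu
    have c1 := hcapA p.1 ha
    have c2 := hcapB p.2 hb
    unfold clccDim
    omega
  · rintro p ⟨ha, hb, hu⟩
    obtain ⟨ta, hta, hsa, hca⟩ := hmaxA p.1 ha
    obtain ⟨tb, htb, hsb, hcb⟩ := hmaxB p.2 hb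
    have htu : ta.image colA ∪ tb.image colB = Finset.univ := by
      apply Finset.univ_subset_iff.mp
      rw [← hu]
      exact Finset.union_subset_union (Finset.image_subset_image hsa)
        (Finset.image_subset_image hsb)
    have hk := key ta tb hta htb htu
    refine ⟨(ta, tb), ⟨hta, htb, htu⟩, hsa, hsb, ?_⟩
    unfold clccDim
    simp only
    omega
end
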